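/- arXiv:1108.3652 — 2 statements merged into one kernel-verified Lean document; each statement's English description precedes it below -/
import Mathlib

section
/- Let X^n be an i.i.d. sequence with each X_i ∼ p_0 on a finite alphabet, let A^n = f(X^n) be a deterministic function of X^n, and let B_i = g_i(A^{i-1}) for each i (B_i a deterministic function of A_1,...,A_{i-1}). Let Q be uniform on {1,...,n} independent of X^n. Then H(X_Q) ≤ H(X_Q, A_Q | B_Q), equivalently I(X_Q; B_Q) ≤ H(A_Q | X_Q, B_Q), where (X_Q,A_Q,B_Q) has the time-averaged joint distribution. -/
open scoped Classical BigOperators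

noncomputable section

namespace Coord

variable {Ω : Type*} [Fintype Ω]

/-- `p` is a probability mass function on the finite sample space `Ω`. -/
def IsPmf (p : Ω → ℝ) : Prop := (∀ ω, 0 ≤ p ω) ∧ ∑ ω, p ω = 1

/-- Distribution (pmf) of the random variable `X` under `p`. -/
def dist (p : Ω → ℝ) {α : Type*} [Fintype α] (X : Ω → α) (a : α) : ℝ :=
  ∑ ω, if X ω = a then p ω else 0

/-- Shannon entropy (base 2) of `X` under `p`. -/
def H (p : Ω → ℝ) {α : Type*} [Fintype α] (X : Ω → α) : ℝ :=
  -∑ a, dist p X a * Real.logb 2 (dist p X a)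

/-- Conditional entropy `H(X | Y)`. -/
def Hc (p : Ω → ℝ) {α β : Type*} [Fintype α] [Fintype β] (X : Ω → α) (Y : Ω → β) : ℝ :=
  H p (fun ω => (X ω, Y ω)) - H p Y

/-- Mutual information `I(X ; Y)`. -/
def MI (p : Ω → ℝ) {α β : Type*} [Fintype α] [Fintype β] (X : Ω → α) (Y : Ω → β) : ℝ :=
  H p X + H p Y - H p (fun ω => (X ω, Y ω))

/-- Conditional mutual information `I(X ; Y | Z)`. -/
def MIc (p : Ω → ℝ) {α β γ : Type*} [Fintype α] [Fintype β] [Fintype γ]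
    (X : Ω → α) (Y : Ω → β) (Z : Ω → γ) : ℝ :=
  H p (fun ω => (X ω, Z ω)) + H p (fun ω => (Y ω, Z ω))
    - H p (fun ω => (X ω, Y ω, Z ω)) - H p Z

/-- `X` and `Y` are independent under `p`. -/
def Indep (p : Ω → ℝ) {α β : Type*} [Fintype α] [Fintype β] (X : Ω → α) (Y : Ω → β) : Prop :=
  ∀ a b, dist p (fun ω => (X ω, Y ω)) (a, b) = dist p X a * dist p Y b

/-- Markov chain `X - A - B` : `X` and `B` are conditionally independent given `A`. -/
def Markov (p : Ω → ℝ) {α β γ : Type*} [Fintype α] [Fintype β] [Fintype γ]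
    (X : Ω → α) (A : Ω → β) (B : Ω → γ) : Prop :=
  ∀ x a b, dist p (fun ω => (X ω, A ω, B ω)) (x, a, b) * dist p A a =
    dist p (fun ω => (X ω, A ω)) (x, a) * dist p (fun ω => (A ω, B ω)) (a, b)

/-- The random vector `X` is i.i.d. with per-coordinate marginal `p0`. -/
def IID {n : ℕ} (p : Ω → ℝ) {𝒳 : Type*} [Fintype 𝒳] (X : Ω → Fin n → 𝒳) (p0 : 𝒳 → ℝ) : Prop :=
  ∀ x : Fin n → 𝒳, dist p X x = ∏ i, p0 (x i)

/-- The joint pmf on `Ω × Fin n` obtained by adjoining a uniform, independent time index `Q`. -/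
def unif {n : ℕ} (p : Ω → ℝ) : Ω × Fin n → ℝ := fun ωq => p ωq.1 / n

/-- The strict prefix `X^{q-1}` of a random vector, padded with `none`. -/
def pre {n : ℕ} {𝒳 : Type*} (X : Ω → Fin n → 𝒳) (q : Fin n) : Ω → Fin n → Option 𝒳 :=
  fun ω i => if (i : ℕ) < (q : ℕ) then some (X ω i) else none

end Coord

open Coord

/-!
Put `Z_i = (X_i, A_i)`. As `A^n` is a function of `X^n` and the `X_i` are i.i.d.,
`n H(X_Q) = H(X^n) = H(Z^n) = ∑ i, H(Z_i | Z^{i-1})` by the chain rule. Each `B_i` is a function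
of `Z^{i-1}`, so `H(Z_i | Z^{i-1}) ≤ H(Z_i | B_i)`. Averaging over `i` turns the right-hand side
into `n H(Z_Q | B_Q, Q) ≤ n H(Z_Q | B_Q)`. The mutual-information form is a rearrangement of the
same inequality.
-/

namespace Coord

section Entropy

variable {Ω : Type*} [Fintype Ω] {p : Ω → ℝ} {α β γ : Type*} [Fintype α] [Fintype β] [Fintype γ]

theorem sum_dist_mul (Y : Ω → α) (F : α → ℝ) :
    ∑ a, dist p Y a * F a = ∑ ω, p ω * F (Y ω) := by
  simp only [dist, Finset.sum_mul, ite_mul, zero_mul]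
  rw [Finset.sum_comm]
  simp

theorem sum_dist (Y : Ω → α) : ∑ a, dist p Y a = ∑ ω, p ω := by
  simpa using sum_dist_mul (p := p) Y (fun _ => 1)

theorem dist_nonneg (hp : ∀ ω, 0 ≤ p ω) (Y : Ω → α) (a : α) : 0 ≤ dist p Y a :=
  Finset.sum_nonneg fun ω _ => by split_ifs <;> simp [hp ω]

theorem dist_pos_of_pos (hp : ∀ ω, 0 ≤ p ω) (Y : Ω → α) {ω : Ω} (hω : 0 < p ω) :
    0 < dist p Y (Y ω) :=
  hω.trans_le <| (if_pos rfl).symm.trans_le <|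
    Finset.single_le_sum (f := fun ω' => if Y ω' = Y ω then p ω' else 0)
      (fun ω' _ => by split_ifs <;> simp [hp ω']) (Finset.mem_univ ω)

theorem dist_comp (Y : Ω → α) (u : α → β) (b : β) :
    dist p (fun ω => u (Y ω)) b = ∑ a with u a = b, dist p Y a := by
  have h := sum_dist_mul (p := p) Y (fun a => if u a = b then 1 else 0)
  simp only [mul_ite, mul_one, mul_zero] at h
  rw [Finset.sum_filter, h]
  rfl

theorem sum_dist_prod_left (Y : Ω → α) (Z : Ω → β) (b : β) :
    ∑ a, dist p (fun ω => (Y ω, Z ω)) (a, b) = dist p Z b := by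
  simp only [dist, Prod.mk.injEq, ite_and]
  rw [Finset.sum_comm]
  simp

theorem sum_dist_prod_right (Y : Ω → α) (Z : Ω → β) (a : α) :
    ∑ b, dist p (fun ω => (Y ω, Z ω)) (a, b) = dist p Y a := by
  simp only [dist, Prod.mk.injEq, ite_and]
  rw [Finset.sum_comm]
  simp

theorem H_eq_neg_sum_log (Y : Ω → α) :
    H p Y = -(∑ ω, p ω * Real.log (dist p Y (Y ω))) / Real.log 2 := by
  rw [H, sum_dist_mul Y (fun a => Real.logb 2 (dist p Y a)), neg_div, Finset.sum_div]
  simp [Real.logb, mul_div_assoc]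

theorem H_eq_sum_negMulLog (Y : Ω → α) :
    H p Y = (∑ a, Real.negMulLog (dist p Y a)) / Real.log 2 := by
  simp only [H, Real.negMulLog, Real.logb, Finset.sum_div, ← Finset.sum_neg_distrib]
  congr! 1 with a
  ring

theorem H_comp_of_injOn (Y : Ω → α) {u : α → β} (hu : Set.InjOn u (Set.range Y)) :
    H p (fun ω => u (Y ω)) = H p Y := by
  have hd : ∀ ω, dist p (fun ω => u (Y ω)) (u (Y ω)) = dist p Y (Y ω) := fun ω =>
    Finset.sum_congr rfl fun ω' _ => by
      rw [hu.eq_iff (Set.mem_range_self ω') (Set.mem_range_self ω)]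
  simp only [H_eq_neg_sum_log, hd]

theorem H_comp_of_injective (Y : Ω → α) {u : α → β} (hu : Function.Injective u) :
    H p (fun ω => u (Y ω)) = H p Y :=
  H_comp_of_injOn Y hu.injOn

theorem H_const (hp1 : ∑ ω, p ω = 1) (c : α) : H p (fun _ => c) = 0 := by
  have hc : dist p (fun _ => c) c = 1 := by simp [dist, hp1]
  simp [H_eq_neg_sum_log, hc]

theorem H_eq_sum_of_dist_eq_prod {ι : Type*} [Fintype ι] [DecidableEq ι]
    (hp : ∀ ω, 0 ≤ p ω) (X : Ω → ι → α)
    (h : ∀ v : ι → α, dist p X v = ∏ i, dist p (fun ω => X ω i) (v i)) :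
    H p X = ∑ i, H p (fun ω => X ω i) := by
  have hterm : ∀ ω, p ω * Real.log (dist p X (X ω))
      = ∑ i, p ω * Real.log (dist p (fun ω => X ω i) (X ω i)) := by
    intro ω
    rcases (hp ω).eq_or_lt with hω | hω
    · simp [← hω]
    rw [h, Real.log_prod fun i _ => (dist_pos_of_pos hp (fun ω => X ω i) hω).ne', Finset.mul_sum]
  simp only [H_eq_neg_sum_log, hterm, ← Finset.sum_div, ← Finset.sum_neg_distrib]
  rw [Finset.sum_comm]

theorem sum_mul_log_div_dist_le (hp : ∀ ω, 0 ≤ p ω) (V : Ω → α) (b : α → ℝ)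
    (hb : ∀ v, 0 ≤ b v) (hb_pos : ∀ ω, 0 < p ω → 0 < b (V ω)) :
    ∑ ω, p ω * Real.log (b (V ω) / dist p V (V ω)) ≤ ∑ v, b v - ∑ ω, p ω := by
  have hterm : ∀ ω, p ω * Real.log (b (V ω) / dist p V (V ω))
      ≤ p ω * (b (V ω) / dist p V (V ω) - 1) := fun ω => by
    rcases (hp ω).eq_or_lt with h | h
    · simp [← h]
    exact mul_le_mul_of_nonneg_left
      (Real.log_le_sub_one_of_pos (div_pos (hb_pos ω h) (dist_pos_of_pos hp V h))) h.le
  have hle : ∀ v, dist p V v * (b v / dist p V v) ≤ b v := fun v => by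
    rcases (dist_nonneg hp V v).eq_or_lt with h | h
    · simp [← h, hb v]
    · rw [mul_div_cancel₀ _ h.ne']
  calc _ ≤ ∑ ω, p ω * (b (V ω) / dist p V (V ω) - 1) := Finset.sum_le_sum fun ω _ => hterm ω
    _ = ∑ v, dist p V v * (b v / dist p V v) - ∑ ω, p ω := by
      simp only [mul_sub, mul_one, Finset.sum_sub_distrib]
      rw [← sum_dist_mul V (fun v => b v / dist p V v)]
    _ ≤ ∑ v, b v - ∑ ω, p ω := by gcongr with v; exact hle v

theorem Hc_pair_le (hp : ∀ ω, 0 ≤ p ω) (Y : Ω → α) (Z : Ω → β) (W : Ω → γ) :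
    Hc p Y (fun ω => (Z ω, W ω)) ≤ Hc p Y Z := by
  set V : Ω → α × β × γ := fun ω => (Y ω, Z ω, W ω)
  -- the law of `(Y, Z, W)` under which `Y` and `W` are conditionally independent given `Z`
  set b : α × β × γ → ℝ := fun v =>
    dist p (fun ω => (Y ω, Z ω)) (v.1, v.2.1) * dist p (fun ω => (Z ω, W ω)) v.2 /
      dist p Z v.2.1
  have hb_sum : ∑ v, b v = ∑ ω, p ω := by
    simp only [b, Fintype.sum_prod_type]
    rw [Finset.sum_comm]
    simp_rw [← Finset.sum_div, ← Finset.sum_mul_sum, sum_dist_prod_left, sum_dist_prod_right,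
      mul_self_div_self]
    exact sum_dist Z
  have hlog : ∀ ω, p ω * Real.log (b (V ω) / dist p V (V ω))
      = p ω * (Real.log (dist p (fun ω => (Y ω, Z ω)) (Y ω, Z ω))
        + Real.log (dist p (fun ω => (Z ω, W ω)) (Z ω, W ω)) - Real.log (dist p V (V ω))
        - Real.log (dist p Z (Z ω))) := fun ω => by
    rcases (hp ω).eq_or_lt with h | h
    · simp [← h]
    have hYZ := dist_pos_of_pos hp (fun ω => (Y ω, Z ω)) h
    have hZW := dist_pos_of_pos hp (fun ω => (Z ω, W ω)) h
    have hZ := dist_pos_of_pos hp Z h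
    simp only [b, V]
    rw [Real.log_div (by positivity) (dist_pos_of_pos hp V h).ne',
      Real.log_div (by positivity) hZ.ne', Real.log_mul hYZ.ne' hZW.ne']
    ring
  have hgibbs := sum_mul_log_div_dist_le hp V b
    (fun v => div_nonneg (mul_nonneg (dist_nonneg hp _ _) (dist_nonneg hp _ _))
      (dist_nonneg hp _ _))
    (fun ω h => div_pos (mul_pos (dist_pos_of_pos hp (fun ω => (Y ω, Z ω)) h)
      (dist_pos_of_pos hp (fun ω => (Z ω, W ω)) h)) (dist_pos_of_pos hp Z h))
  simp only [hlog, hb_sum, sub_self, mul_add, mul_sub, Finset.sum_add_distrib,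
    Finset.sum_sub_distrib] at hgibbs
  unfold Hc
  simp only [H_eq_neg_sum_log]
  rw [div_sub_div_same, div_sub_div_same, div_le_div_iff_of_pos_right (Real.log_pos one_lt_two)]
  linarith

theorem Hc_le_Hc_comp (hp : ∀ ω, 0 ≤ p ω) (Y : Ω → α) (W : Ω → β) (u : β → γ) :
    Hc p Y W ≤ Hc p Y (fun ω => u (W ω)) := by
  have hpair : Hc p Y (fun ω => (u (W ω), W ω)) = Hc p Y W := by
    unfold Hc
    rw [H_comp_of_injective (fun ω => (Y ω, W ω)) (u := fun yw => (yw.1, u yw.2, yw.2))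
        fun _ _ h => by simp_all [Prod.ext_iff],
      H_comp_of_injective W (u := fun w => (u w, w)) fun _ _ h => (Prod.ext_iff.1 h).2]
  exact hpair ▸ Hc_pair_le hp Y _ W

theorem MI_le_Hc_of_H_le_Hc {X : Ω → α} {A : Ω → β} {B : Ω → γ}
    (h : H p X ≤ Hc p (fun ω => (X ω, A ω)) B) : MI p X B ≤ Hc p A (fun ω => (X ω, B ω)) := by
  have hswap : H p (fun ω => (A ω, X ω, B ω)) = H p (fun ω => ((X ω, A ω), B ω)) :=
    H_comp_of_injective (fun ω => ((X ω, A ω), B ω)) (u := fun v => (v.1.2, v.1.1, v.2))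
      fun _ _ h => by simp_all [Prod.ext_iff]
  unfold MI Hc at *
  linarith

end Entropy

theorem pre_comp {Ω α β : Type*} {n : ℕ} (Y : Ω → Fin n → α) (u : α → β) (q : Fin n) (ω : Ω) :
    pre (fun ω i => u (Y ω i)) q ω = fun j => (pre Y q ω j).map u := by
  funext j
  simp only [pre]
  split_ifs <;> rfl

section ChainRule

variable {Ω γ : Type*} [Fintype Ω] [Fintype γ] {p : Ω → ℝ} {n : ℕ}

/-- `pre` with a prefix length `k : ℕ` that may equal `n`. -/
def trunc (Z : Ω → Fin n → γ) (k : ℕ) : Ω → Fin n → Option γ :=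
  fun ω i => if (i : ℕ) < k then some (Z ω i) else none

theorem H_trunc_zero (hp1 : ∑ ω, p ω = 1) (Z : Ω → Fin n → γ) : H p (trunc Z 0) = 0 := by
  have h0 : trunc Z 0 = fun _ _ => none := by
    funext ω i
    simp [trunc]
  rw [h0, H_const hp1]

theorem H_trunc_self (Z : Ω → Fin n → γ) : H p (trunc Z n) = H p Z := by
  have hn : trunc Z n = fun ω i => some (Z ω i) := by
    funext ω i
    simp [trunc]
  rw [hn]
  exact H_comp_of_injective Z (u := fun z i => some (z i))
    fun _ _ h => funext fun i => Option.some_injective _ (congrFun h i)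

theorem H_trunc_succ (Z : Ω → Fin n → γ) (i : Fin n) :
    H p (trunc Z (i + 1)) = H p (fun ω => (Z ω i, trunc Z i ω)) := by
  have htrunc : trunc Z (i + 1) = fun ω => Function.update (trunc Z i ω) i (some (Z ω i)) := by
    funext ω j
    rcases eq_or_ne j i with rfl | hj
    · simp [trunc]
    · have hlt : (j : ℕ) < i + 1 ↔ (j : ℕ) < i := by
        have := Fin.val_ne_of_ne hj
        omega
      simp only [trunc, Function.update_of_ne hj, hlt]
  rw [htrunc]
  refine H_comp_of_injOn (fun ω => (Z ω i, trunc Z i ω))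
    (u := fun c => Function.update c.2 i (some c.1)) ?_
  rintro _ ⟨ω, rfl⟩ _ ⟨ω', rfl⟩ h
  have hi := congrFun h i
  simp only [Function.update_self, Option.some.injEq] at hi
  refine Prod.ext hi (funext fun j => ?_)
  rcases eq_or_ne j i with rfl | hj
  · simp [trunc]
  · simpa [Function.update_of_ne hj] using congrFun h j

theorem H_eq_sum_Hc_pre (hp1 : ∑ ω, p ω = 1) (Z : Ω → Fin n → γ) :
    H p Z = ∑ i, Hc p (fun ω => Z ω i) (pre Z i) := by
  have hstep : ∀ i : Fin n, Hc p (fun ω => Z ω i) (pre Z i)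
      = H p (trunc Z (i + 1)) - H p (trunc Z i) := fun i => by
    rw [H_trunc_succ]
    rfl
  rw [Finset.sum_congr rfl fun i _ => hstep i,
    Fin.sum_univ_eq_sum_range (fun k => H p (trunc Z (k + 1)) - H p (trunc Z k)),
    Finset.sum_range_sub (fun k => H p (trunc Z k)), H_trunc_self, H_trunc_zero hp1, sub_zero]

end ChainRule

section TimeSharing

variable {Ω α γ : Type*} [Fintype Ω] [Fintype α] [Fintype γ] {p : Ω → ℝ} {n : ℕ}

theorem dist_unif (V : Ω × Fin n → γ) (c : γ) :
    dist (unif p) V c = (n : ℝ)⁻¹ * ∑ i, dist p (fun ω => V (ω, i)) c := by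
  simp only [dist, unif, Fintype.sum_prod_type, Finset.mul_sum]
  rw [Finset.sum_comm]
  simp only [mul_ite, mul_zero, div_eq_inv_mul]

theorem dist_unif_prod_idx (W : Ω × Fin n → γ) (c : γ) (i : Fin n) :
    dist (unif p) (fun ωq => (W ωq, ωq.2)) (c, i) = (n : ℝ)⁻¹ * dist p (fun ω => W (ω, i)) c := by
  rw [dist_unif, Finset.sum_eq_single i (fun j _ hj => by simp [dist, hj]) (by simp)]
  simp [dist]

theorem H_unif_prod_idx (hp1 : ∑ ω, p ω = 1) (W : Ω × Fin n → γ) :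
    H (unif p) (fun ωq => (W ωq, ωq.2))
      = Real.logb 2 n + (n : ℝ)⁻¹ * ∑ i, H p (fun ω => W (ω, i)) := by
  have hlog : (n : ℝ) * Real.negMulLog (n : ℝ)⁻¹ = Real.log n := by
    rcases eq_or_ne (n : ℝ) 0 with h | h
    · simp [h]
    · rw [Real.negMulLog, Real.log_inv]
      field_simp
  simp only [H_eq_sum_negMulLog, Fintype.sum_prod_type_right, dist_unif_prod_idx,
    Real.negMulLog_mul, Finset.sum_add_distrib, ← Finset.sum_mul, ← Finset.mul_sum, sum_dist, hp1]
  rw [← Finset.sum_div]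
  simp only [Finset.sum_const, Finset.card_univ, Fintype.card_fin, nsmul_eq_mul, mul_one, hlog,
    Real.logb]
  ring

theorem Hc_unif_prod_idx (hp1 : ∑ ω, p ω = 1) (Y : Ω × Fin n → α) (Z : Ω × Fin n → γ) :
    Hc (unif p) Y (fun ωq => (Z ωq, ωq.2))
      = (n : ℝ)⁻¹ * ∑ i, Hc p (fun ω => Y (ω, i)) (fun ω => Z (ω, i)) := by
  have hassoc : H (unif p) (fun ωq => (Y ωq, Z ωq, ωq.2))
      = H (unif p) (fun ωq => ((Y ωq, Z ωq), ωq.2)) :=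
    H_comp_of_injective (fun ωq => ((Y ωq, Z ωq), ωq.2)) (Equiv.prodAssoc α γ (Fin n)).injective
  unfold Hc
  rw [hassoc, H_unif_prod_idx hp1, H_unif_prod_idx hp1, Finset.sum_sub_distrib]
  ring

theorem H_unif_of_dist_eq (hn : 0 < n) (V : Ω × Fin n → γ) (i : Fin n)
    (h : ∀ j, dist p (fun ω => V (ω, j)) = dist p (fun ω => V (ω, i))) :
    H (unif p) V = H p (fun ω => V (ω, i)) := by
  have hd : dist (unif p) V = dist p (fun ω => V (ω, i)) := by
    funext c
    simp only [dist_unif, h, Finset.sum_const, Finset.card_univ, Fintype.card_fin, nsmul_eq_mul]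
    field_simp
  rw [H, hd, H]

end TimeSharing

section IID

variable {Ω 𝒳 : Type*} [Fintype Ω] [Fintype 𝒳] {p : Ω → ℝ} {n : ℕ} {X : Ω → Fin n → 𝒳}
  {p0 : 𝒳 → ℝ}

theorem IID.sum_pow_eq_one (hp1 : ∑ ω, p ω = 1) (h : IID p X p0) : (∑ x, p0 x) ^ n = 1 := by
  rw [Fintype.sum_pow, ← hp1, ← sum_dist X]
  exact Finset.sum_congr rfl fun v _ => (h v).symm

theorem IID.dist_coord (h : IID p X p0) (i : Fin n) (x : 𝒳) :
    dist p (fun ω => X ω i) x = p0 x * (∑ y, p0 y) ^ (n - 1) := by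
  have hfilter : ({v | v i = x} : Finset (Fin n → 𝒳))
      = Fintype.piFinset fun j => if j = i then {x} else Finset.univ := by
    ext v
    simp only [Finset.mem_filter, Finset.mem_univ, true_and, Fintype.mem_piFinset]
    refine ⟨fun hv j => ?_, fun hv => by simpa using hv i⟩
    split_ifs with hj
    · simp [hj, hv]
    · exact Finset.mem_univ _
  rw [dist_comp X (fun v => v i) x, hfilter, Finset.sum_congr rfl fun v _ => h v,
    ← Finset.prod_univ_sum]
  simp [apply_ite (fun s => ∑ y ∈ s, p0 y), Finset.prod_ite, Finset.filter_eq', Finset.filter_ne',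
    Finset.card_erase_of_mem]

theorem IID.dist_eq_prod (hp1 : ∑ ω, p ω = 1) (h : IID p X p0) (v : Fin n → 𝒳) :
    dist p X v = ∏ i, dist p (fun ω => X ω i) (v i) := by
  simp only [h.dist_coord, Finset.prod_mul_distrib, Finset.prod_const, Finset.card_univ,
    Fintype.card_fin, h v]
  rw [← pow_mul, mul_comm (n - 1), pow_mul, h.sum_pow_eq_one hp1, one_pow, mul_one]

theorem IID.H_eq_mul_H_unif (hn : 0 < n) (hp : IsPmf p) (h : IID p X p0) :
    H p X = n * H (unif p) (fun ωq : Ω × Fin n => X ωq.1 ωq.2) := by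
  have hcoord : ∀ i, H p (fun ω => X ω i) = H (unif p) (fun ωq : Ω × Fin n => X ωq.1 ωq.2) :=
    fun i => (H_unif_of_dist_eq hn (fun ωq : Ω × Fin n => X ωq.1 ωq.2) i
      fun j => funext fun x => (h.dist_coord j x).trans (h.dist_coord i x).symm).symm
  rw [H_eq_sum_of_dist_eq_prod hp.1 X (h.dist_eq_prod hp.2)]
  simp only [hcoord, Finset.sum_const, Finset.card_univ, Fintype.card_fin, nsmul_eq_mul]

end IID
end Coord

/-- `X^n` i.i.d., `A^n = f(X^n)`, `B_i = g_i(A^{i-1})`, `Q` uniform independent.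
Then `H(X_Q) ≤ H(X_Q, A_Q | B_Q)`, equivalently `I(X_Q; B_Q) ≤ H(A_Q | X_Q, B_Q)`. -/
theorem stmt3 {Ω 𝒳 𝒜 ℬ : Type*} [Fintype Ω] [Fintype 𝒳] [Fintype 𝒜] [Fintype ℬ]
    {n : ℕ} (hn : 0 < n) (p : Ω → ℝ) (hp : IsPmf p) (p0 : 𝒳 → ℝ)
    (X : Ω → Fin n → 𝒳) (hiid : IID p X p0)
    (f : (Fin n → 𝒳) → Fin n → 𝒜) (g : Fin n → (Fin n → Option 𝒜) → ℬ)
    (A : Ω → Fin n → 𝒜) (hA : A = fun ω => f (X ω))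
    (B : Ω → Fin n → ℬ) (hB : ∀ ω i, B ω i = g i (pre A i ω)) :
    H (unif p) (fun ωq : Ω × Fin n => X ωq.1 ωq.2) ≤
      Hc (unif p) (fun ωq => (X ωq.1 ωq.2, A ωq.1 ωq.2)) (fun ωq => B ωq.1 ωq.2) ∧
    MI (unif p) (fun ωq : Ω × Fin n => X ωq.1 ωq.2) (fun ωq => B ωq.1 ωq.2) ≤
      Hc (unif p) (fun ωq => A ωq.1 ωq.2) (fun ωq => (X ωq.1 ωq.2, B ωq.1 ωq.2)) := by
  set Z : Ω → Fin n → 𝒳 × 𝒜 := fun ω i => (X ω i, A ω i)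
  have hHZ : H p Z = H p X := by
    subst hA
    exact H_comp_of_injective X (u := fun x i => (x i, f x i))
      fun x y h => funext fun i => (Prod.ext_iff.1 (congrFun h i)).1
  have hpreA : ∀ i ω, pre A i ω = fun j => (pre Z i ω j).map Prod.snd :=
    pre_comp (fun ω j => Z ω j) Prod.snd
  have hstep : ∀ i, Hc p (fun ω => Z ω i) (pre Z i) ≤ Hc p (fun ω => Z ω i) (fun ω => B ω i) :=
    fun i => by
      simp only [hB, hpreA]
      exact Hc_le_Hc_comp hp.1 _ (pre Z i) fun c => g i fun j => (c j).map Prod.snd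
  have hn' : (0 : ℝ) < n := Nat.cast_pos.2 hn
  have hmain : n * H (unif p) (fun ωq : Ω × Fin n => X ωq.1 ωq.2)
      ≤ n * Hc (unif p) (fun ωq => Z ωq.1 ωq.2) (fun ωq => (B ωq.1 ωq.2, ωq.2)) := by
    rw [← hiid.H_eq_mul_H_unif hn hp, ← hHZ, H_eq_sum_Hc_pre hp.2, Hc_unif_prod_idx hp.2,
      mul_inv_cancel_left₀ hn'.ne']
    exact Finset.sum_le_sum fun i _ => hstep i
  have hunif : ∀ ωq, 0 ≤ unif (n := n) p ωq := fun ωq => div_nonneg (hp.1 _) n.cast_nonneg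
  have hXQ := (le_of_mul_le_mul_left hmain hn').trans (Hc_pair_le hunif _ _ _)
  exact ⟨hXQ, MI_le_Hc_of_H_le_Hc hXQ⟩
end
end

section
/- Consider the repeated guessing game with reward Π(x,a,b) = 1{a = x and b = x}, source X ∼ Bernoulli(1/2), and actions a, b ∈ {0,1}. The maximum of E[Π(X,A,B)] = P(A = X, B = X) over all joint distributions of (X,A,B) with X ∼ Bernoulli(1/2) satisfying H(A|X,B) ≥ I(X;B) is strictly greater than 3/4. -/
open scoped Classical BigOperators

noncomputable section

/-!
The constraint `H(A | X,B) ≥ I(X;B)` is equivalent to `H(X) + H(B) ≤ H(X,A,B)`. Put mass `2/5` on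
each of the two winning atoms `A = X = B` and spread the remaining `1/5` uniformly over the other six
atoms. Then `X` and `B` are fair bits, so `H(X) + H(B) = 2`, while `H(X,A,B) ≥ 2` reduces to
`2 ^ 14 ≤ 5 ^ 4 * 30`; the winning probability is `4/5`.
-/

namespace Coord

variable {Ω : Type*} [Fintype Ω]

theorem MI_le_Hc_prod_iff (p : Ω → ℝ) {α β γ : Type*} [Fintype α] [Fintype β] [Fintype γ]
    (X : Ω → α) (Y : Ω → β) (Z : Ω → γ) :
    MI p Y Z ≤ Hc p X (fun ω => (Y ω, Z ω)) ↔
      H p Y + H p Z ≤ H p (fun ω => (X ω, Y ω, Z ω)) := by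
  unfold MI Hc
  constructor <;> intro h <;> linarith

theorem dist_apply_of_injective (p : Ω → ℝ) {α : Type*} [Fintype α] {X : Ω → α}
    (hX : X.Injective) (ω : Ω) : dist p X (X ω) = p ω := by
  unfold dist
  rw [Finset.sum_eq_single ω (fun ω' _ hne => if_neg (hX.ne hne)) (by simp)]
  exact if_pos rfl

theorem H_of_bijective (p : Ω → ℝ) {α : Type*} [Fintype α] {X : Ω → α}
    (hX : X.Bijective) : H p X = -∑ ω, p ω * Real.logb 2 (p ω) := by
  unfold H
  rw [← Fintype.sum_bijective X hX _ _ fun _ => rfl]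
  simp only [dist_apply_of_injective p hX.injective]

theorem H_of_uniform (p : Ω → ℝ) {α : Type*} [Fintype α] {X : Ω → α}
    (hX : ∀ a, dist p X a = (Fintype.card α : ℝ)⁻¹) :
    H p X = Real.logb 2 (Fintype.card α) := by
  unfold H
  simp only [hX, Finset.sum_const, Finset.card_univ, nsmul_eq_mul, Real.logb_inv]
  rcases (Fintype.card α).eq_zero_or_pos with h | h
  · simp [h]
  · field_simp

end Coord

open Coord

def guessingPmf : Bool × Bool × Bool → ℝ :=
  fun ω => if ω.2.1 = ω.1 ∧ ω.2.2 = ω.1 then 2 / 5 else 1 / 30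

theorem isPmf_guessingPmf : IsPmf guessingPmf := by
  refine ⟨fun ω => ?_, ?_⟩
  · unfold guessingPmf; split <;> norm_num
  · norm_num [guessingPmf, Fintype.sum_prod_type]

theorem dist_fst_guessingPmf (x : Bool) :
    dist guessingPmf (fun ω : Bool × Bool × Bool => ω.1) x = (Fintype.card Bool : ℝ)⁻¹ := by
  cases x <;> norm_num [Coord.dist, guessingPmf, Fintype.sum_prod_type]

theorem dist_snd_snd_guessingPmf (b : Bool) :
    dist guessingPmf (fun ω : Bool × Bool × Bool => ω.2.2) b = (Fintype.card Bool : ℝ)⁻¹ := by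
  cases b <;> norm_num [Coord.dist, guessingPmf, Fintype.sum_prod_type]

theorem H_guessingPmf :
    H guessingPmf (fun ω : Bool × Bool × Bool => (ω.2.1, ω.1, ω.2.2)) =
      -(4 / 5 * Real.logb 2 (2 / 5) + 1 / 5 * Real.logb 2 (1 / 30)) := by
  have hbij : (fun ω : Bool × Bool × Bool => (ω.2.1, ω.1, ω.2.2)).Bijective :=
    Function.bijective_iff_has_inverse.mpr
      ⟨fun ω => (ω.2.1, ω.1, ω.2.2), fun _ => rfl, fun _ => rfl⟩
  rw [H_of_bijective _ hbij]
  simp only [guessingPmf, Fintype.sum_prod_type, Fintype.sum_bool]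
  norm_num
  ring

theorem two_le_entropy_guessingPmf :
    2 ≤ -(4 / 5 * Real.logb 2 (2 / 5) + 1 / 5 * Real.logb 2 (1 / 30)) := by
  have hrw : -(4 / 5 * Real.logb 2 (2 / 5) + 1 / 5 * Real.logb 2 (1 / 30)) =
      Real.logb 2 ((5 / 2) ^ 4 * 30) / 5 := by
    rw [Real.logb_mul (by norm_num) (by norm_num), Real.logb_pow,
      show (2 / 5 : ℝ) = (5 / 2)⁻¹ by norm_num, show (1 / 30 : ℝ) = 30⁻¹ by norm_num,
      Real.logb_inv, Real.logb_inv]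
    ring
  have h10 : (10 : ℝ) ≤ Real.logb 2 ((5 / 2) ^ 4 * 30) := by
    rw [Real.le_logb_iff_rpow_le (by norm_num) (by norm_num)]
    norm_num
  rw [hrw]
  linarith

/-- For the guessing game with `X ∼ Bernoulli(1/2)`, there is a feasible joint
distribution of `(X,A,B)` (i.e. satisfying `H(A|X,B) ≥ I(X;B)`) with `P(A = X = B) > 3/4`. -/
theorem stmt15 :
    ∃ q : Bool × Bool × Bool → ℝ, IsPmf q ∧
      (∀ x, dist q (fun ω : Bool × Bool × Bool => ω.1) x = 1 / 2) ∧
      Hc q (fun ω : Bool × Bool × Bool => ω.2.1) (fun ω => (ω.1, ω.2.2)) ≥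
        MI q (fun ω : Bool × Bool × Bool => ω.1) (fun ω => ω.2.2) ∧
      (∑ ω : Bool × Bool × Bool, if ω.2.1 = ω.1 ∧ ω.2.2 = ω.1 then q ω else 0) > 3 / 4 := by
  refine ⟨guessingPmf, isPmf_guessingPmf, fun x => ?_, ?_, ?_⟩
  · simpa using dist_fst_guessingPmf x
  · have hX : H guessingPmf (fun ω : Bool × Bool × Bool => ω.1) = 1 := by
      simpa using H_of_uniform guessingPmf dist_fst_guessingPmf
    have hB : H guessingPmf (fun ω : Bool × Bool × Bool => ω.2.2) = 1 := by
      simpa using H_of_uniform guessingPmf dist_snd_snd_guessingPmf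
    rw [ge_iff_le, MI_le_Hc_prod_iff, hX, hB, H_guessingPmf]
    linarith [two_le_entropy_guessingPmf]
  · norm_num [guessingPmf, Fintype.sum_prod_type]
end
end
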